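/- If the preferences are positive (f_p(q) > 0 for all distinct agents p, q) and the seat graph has at least one isolated vertex and at least one edge, then no arrangement is envy-free. -/

import Mathlib

/-! An agent seated at an isolated vertex has utility `0`. Swapping with an agent seated at an
endpoint of an edge gives it at least one neighbour, and since all preferences are positive its
utility becomes positive, so it envies that agent. -/

open scoped Classical

noncomputable section

namespace SeatArrangement

variable {P V : Type*}

/-- The utility of agent `p` under arrangement `π`:
the sum, over the seat-graph neighbors `v` of `π p`, of `p`'s preference for the agent seated
at `v`. -/
def utility [Fintype V] (G : SimpleGraph V) (f : P → P → ℝ) (π : P ≃ V) (p : P) : ℝ :=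
  ∑ v : V, if G.Adj (π p) v then f p (π.symm v) else 0

/-- The social welfare of an arrangement: the sum of the utilities of all agents. -/
def sw [Fintype P] [Fintype V] (G : SimpleGraph V) (f : P → P → ℝ) (π : P ≃ V) : ℝ :=
  ∑ p : P, utility G f π p

/-- The `(p,q)`-swap arrangement of `π`. -/
def swapArr (π : P ≃ V) (p q : P) : P ≃ V := (Equiv.swap p q).trans π

/-- `{p, q}` is a blocking pair for `π`: both agents strictly improve by swapping seats. -/
def blocking [Fintype V] (G : SimpleGraph V) (f : P → P → ℝ) (π : P ≃ V) (p q : P) : Prop :=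
  p ≠ q ∧ utility G f π p < utility G f (swapArr π p q) p
        ∧ utility G f π q < utility G f (swapArr π p q) q

/-- An arrangement is stable if it has no blocking pair. -/
def stable [Fintype V] (G : SimpleGraph V) (f : P → P → ℝ) (π : P ≃ V) : Prop :=
  ∀ p q : P, ¬ blocking G f π p q

/-- An arrangement is envy-free if no agent would strictly improve by taking
another agent's seat (via a swap). -/
def envyFree [Fintype V] (G : SimpleGraph V) (f : P → P → ℝ) (π : P ≃ V) : Prop :=
  ∀ p q : P, p ≠ q → utility G f (swapArr π p q) p ≤ utility G f π p

/-- The least utility of an agent under `π` (for a finite nonempty set of agents, the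
infimum of the range of utilities is the minimum utility). -/
def minUtil [Fintype V] (G : SimpleGraph V) (f : P → P → ℝ) (π : P ≃ V) : ℝ :=
  sInf (Set.range (utility G f π))

/-- A maximin arrangement maximizes the least utility of an agent. -/
def maximin [Fintype V] (G : SimpleGraph V) (f : P → P → ℝ) (πf : P ≃ V) : Prop :=
  ∀ π : P ≃ V, minUtil G f π ≤ minUtil G f πf

/-- A maximum arrangement maximizes the social welfare. -/
def maximum [Fintype P] [Fintype V] (G : SimpleGraph V) (f : P → P → ℝ) (πm : P ≃ V) : Prop :=
  ∀ π : P ≃ V, sw G f π ≤ sw G f πm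

end SeatArrangement

open SeatArrangement

namespace SeatArrangement

variable {P V : Type*}

theorem swapArr_apply_left (π : P ≃ V) (p q : P) : swapArr π p q p = π q := by
  simp [swapArr]

variable [Fintype V] (G : SimpleGraph V) (f : P → P → ℝ) (π : P ≃ V)

theorem utility_eq_zero_of_forall_not_adj {p : P} (h : ∀ w, ¬ G.Adj (π p) w) :
    utility G f π p = 0 :=
  Finset.sum_eq_zero fun w _ => if_neg (h w)

theorem utility_pos_of_adj {p : P} (hpos : ∀ q, q ≠ p → 0 < f p q) {w : V}
    (hw : G.Adj (π p) w) : 0 < utility G f π p := by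
  have hterm : ∀ x, G.Adj (π p) x → 0 < f p (π.symm x) := fun x hx =>
    hpos _ fun h => G.ne_of_adj hx (by rw [← h, Equiv.apply_symm_apply])
  refine Finset.sum_pos' (fun x _ => ?_) ⟨w, Finset.mem_univ w, ?_⟩
  · split_ifs with hx
    exacts [(hterm x hx).le, le_rfl]
  · rw [if_pos hw]
    exact hterm w hw

end SeatArrangement

theorem no_envyFree_of_positive_isolated_edge {P V : Type*} [Fintype V]
    (G : SimpleGraph V) (f : P → P → ℝ)
    (hpos : ∀ p q : P, p ≠ q → 0 < f p q)
    (hiso : ∃ v : V, ∀ w : V, ¬ G.Adj v w)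
    (hedge : ∃ u w : V, G.Adj u w) :
    ∀ π : P ≃ V, ¬ envyFree G f π := by
  intro π hπ
  obtain ⟨v, hv⟩ := hiso
  obtain ⟨u, w, huw⟩ := hedge
  set p := π.symm v
  set q := π.symm u
  have hpv : π p = v := π.apply_symm_apply v
  have hqu : π q = u := π.apply_symm_apply u
  have hpq : p ≠ q := fun h => hv w (by rwa [← hpv, h, hqu])
  have h_before : utility G f π p = 0 :=
    utility_eq_zero_of_forall_not_adj G f π (hpv ▸ hv)
  have hpw : G.Adj (swapArr π p q p) w := by rwa [swapArr_apply_left, hqu]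
  have h_after : 0 < utility G f (swapArr π p q) p :=
    utility_pos_of_adj G f _ (fun r hr => hpos p r hr.symm) hpw
  linarith [hπ p q hpq]
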